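/- The point w₂ = z₀ = exp(iπ/3) satisfies the figure-eight gluing equation z₀² − z₀ = 1/(w₂(w₂−1)) and the completeness equations μ(m) = z₂ w₂^{-1} = 1 and μ(l) = z₀² z₂^{-2} = 1, where z₂ = (z₀−1)/z₀ and the w-triple and z-triple follow the standard cross-ratio relations. -/

import Mathlib

/-!
`exp(iπ/3)` is a primitive sixth root of unity, hence a root of the sixth cyclotomic polynomial
`X² - X + 1`. For such a root `z`, `z - 1 = z²`, so `z₂ = (z₀ - 1)/z₀ = z₀ = w₂` and
`z₀(z₀ - 1) = -1 = z₀² - z₀`, which gives all three equations at once.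
-/

open Complex Polynomial

theorem IsPrimitiveRoot.sq_sub_self_add_one_eq_zero {R : Type*} [CommRing R] [IsDomain R]
    {ζ : R} (h : IsPrimitiveRoot ζ 6) : ζ ^ 2 - ζ + 1 = 0 := by
  simpa [cyclotomic_six] using h.isRoot_cyclotomic (by norm_num)

theorem isPrimitiveRoot_exp_pi_mul_I_div_three :
    IsPrimitiveRoot (exp (Real.pi * I / 3)) 6 := by
  convert isPrimitiveRoot_exp 6 (by norm_num) using 2
  push_cast
  ring

theorem sub_one_div_self_eq_self {K : Type*} [Field K] {z : K} (hz : z ^ 2 - z + 1 = 0) :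
    (z - 1) / z = z := by
  have hz₀ : z ≠ 0 := by
    rintro rfl
    norm_num at hz
  rw [div_eq_iff hz₀]
  linear_combination -hz

/-- The point w₂ = z₀ = exp(iπ/3) satisfies the figure-eight gluing equation and the
completeness equations μ(m) = z₂w₂⁻¹ = 1 and μ(l) = z₀²z₂⁻² = 1, where z₂ = (z₀−1)/z₀. -/
theorem stmt9 :
    let w₂ : ℂ := Complex.exp (Real.pi * Complex.I / 3)
    let z₀ : ℂ := Complex.exp (Real.pi * Complex.I / 3)
    let z₂ : ℂ := (z₀ - 1) / z₀
    z₀ ^ 2 - z₀ = 1 / (w₂ * (w₂ - 1)) ∧ z₂ * w₂⁻¹ = 1 ∧ z₀ ^ 2 * (z₂ ^ 2)⁻¹ = 1 := by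
  intro w₂ z₀ z₂
  have hz : z₀ ^ 2 - z₀ + 1 = 0 :=
    isPrimitiveRoot_exp_pi_mul_I_div_three.sq_sub_self_add_one_eq_zero
  have hz₀ : z₀ ≠ 0 := exp_ne_zero _
  have hz₂ : z₂ = z₀ := sub_one_div_self_eq_self hz
  refine ⟨?_, ?_, ?_⟩
  · show z₀ ^ 2 - z₀ = 1 / (z₀ * (z₀ - 1))
    rw [mul_sub_one, ← sq, show z₀ ^ 2 - z₀ = -1 by linear_combination hz]
    norm_num
  · rw [hz₂]
    exact mul_inv_cancel₀ hz₀
  · rw [hz₂]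
    exact mul_inv_cancel₀ (pow_ne_zero 2 hz₀)
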